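/- Let R̄ be a commutative ring of characteristic p, which is relatively perfect and finite free over a base via a presentation, and let S̄ be a commutative R̄-algebra with a finite family (s(i))_{i∈I} ∈ W(S̄)^I such that (s(i)_0)_{i∈I} is an R̄-basis of S̄ and S̄ is relatively perfect over R̄. Then (s(i))_{i∈I} is a basis of W(S̄) as a W(R̄)-module: every w ∈ W(S̄) has a unique expansion w = Σ_{i∈I} r(i)·s(i) with r(i) ∈ W(R̄). Moreover, for all u ∈ ℕ, Σ_i r(i) s(i) ∈ V^u(W(S̄)) if and only if r(i) ∈ V^u(W(R̄)) for every i ∈ I. -/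

import Mathlib

/-!
Write `V^n` for the ideal of Witt vectors whose first `n` coordinates vanish. Since the zeroth
coordinates of `s` form an `R`-basis of `S`, every `w` agrees with some `∑ [a i] • s i` modulo `V`,
and `∑ r i • s i ∈ V` forces every `r i ∈ V`. Writing `r i = V t i`, the projection formula
`V t • x = V (t • F x)` turns the remainder `∑ V t i • s i` into `V (∑ t i • F s i)`, and the
zeroth coordinates of `F s i` are the `p`-th powers of those of `s i`, which again form a basis
because `S` is relatively perfect over `R`. Induction on `n` therefore gives approximations modulo
every `V^n` and shows that `r ↦ ∑ r i • s i` is strict for the `V`-filtrations; as `W(R)` is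
`V`-adically complete and `W(S)` is `V`-adically separated, the map is bijective.
-/

open WittVector

/-- The `W(R)`-module structure on `W(S)` induced by the functorial map
`W(R) →+* W(S)` coming from the structure morphism `R → S`. -/
noncomputable instance wittModule (p : ℕ) [Fact p.Prime] (R S : Type*) [CommRing R]
    [CommRing S] [Algebra R S] : Module (WittVector p R) (WittVector p S) :=
  Module.compHom (WittVector p S) (WittVector.map (algebraMap R S))

/-- `R` viewed as an `R`-module through the Frobenius endomorphism `a ↦ aᵖ`. -/
def FrobTwist (p : ℕ) (R : Type*) : Type _ := R

/-- The identity of `R`, viewed as a map `FrobTwist p R → R`. -/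
def FrobTwist.val {p : ℕ} {R : Type*} (x : FrobTwist p R) : R := x

instance (p : ℕ) (R : Type*) [CommRing R] : AddCommGroup (FrobTwist p R) :=
  inferInstanceAs (AddCommGroup R)

noncomputable instance (p : ℕ) [Fact p.Prime] (R : Type*) [CommRing R] [CharP R p] :
    Module R (FrobTwist p R) :=
  Module.compHom (R := R) R (frobenius R p)

/-- The relative Frobenius `S ⊗_{ψ, Frob_R} R → S`, `s ⊗ r ↦ s^p * ψ(r)`. -/
noncomputable def relativeFrobenius (p : ℕ) [Fact p.Prime] (R S : Type*) [CommRing R]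
    [CommRing S] [Algebra R S] [CharP R p] [CharP S p] :
    TensorProduct R S (FrobTwist p R) →+ S :=
  TensorProduct.liftAddHom
    (AddMonoidHom.mk'
      (fun s => AddMonoidHom.mk' (fun r : FrobTwist p R => s ^ p * algebraMap R S r.val)
        (fun r r' => by
          show s ^ p * algebraMap R S (r.val + r'.val) = _
          rw [map_add, mul_add]))
      (fun s t => by
        ext r
        show (s + t) ^ p * algebraMap R S r.val =
          s ^ p * algebraMap R S r.val + t ^ p * algebraMap R S r.val
        haveI : ExpChar S p := ExpChar.prime Fact.out
        rw [add_pow_char, add_mul]))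
    (fun a s r => by
      show (a • s) ^ p * algebraMap R S r.val =
        s ^ p * algebraMap R S (frobenius R p a * r.val)
      rw [Algebra.smul_def, mul_pow, ← map_pow, map_mul, frobenius_def]
      ring)

open Function

namespace WittVector

variable {p : ℕ} [Fact p.Prime]

local notation "𝕎" => WittVector p

section Filtration

variable {T : Type*} [CommRing T]

theorem sub_coeff_zero (x y : 𝕎 T) : (x - y).coeff 0 = x.coeff 0 - y.coeff 0 :=
  map_sub constantCoeff x y

theorem sum_coeff_zero {ι : Type*} (t : Finset ι) (f : ι → 𝕎 T) :
    (∑ i ∈ t, f i).coeff 0 = ∑ i ∈ t, (f i).coeff 0 :=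
  map_sum constantCoeff f t

theorem mem_range_iterate_verschiebung_iff_mem_ker_truncate {n : ℕ} {x : 𝕎 T} :
    x ∈ Set.range (verschiebung^[n]) ↔ x ∈ RingHom.ker (truncate (p := p) n) := by
  rw [mem_ker_truncate]
  refine ⟨?_, fun h => ⟨_, (eq_iterate_verschiebung h).symm⟩⟩
  rintro ⟨y, rfl⟩ i hi
  exact iterate_verschiebung_coeff_eq_zero y hi

theorem mem_ker_truncate_zero (x : 𝕎 T) : x ∈ RingHom.ker (truncate 0) :=
  (mem_ker_truncate 0 x).2 fun _ hi => absurd hi (Nat.not_lt_zero _)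

theorem ker_truncate_antitone : Antitone fun n => RingHom.ker (truncate (p := p) (R := T) n) :=
  fun _ _ hmn x hx =>
    (mem_ker_truncate _ x).2 fun i hi => (mem_ker_truncate _ x).1 hx i (hi.trans_le hmn)

theorem verschiebung_mem_ker_truncate_succ_iff {n : ℕ} {x : 𝕎 T} :
    verschiebung x ∈ RingHom.ker (truncate (n + 1)) ↔ x ∈ RingHom.ker (truncate n) := by
  simp only [mem_ker_truncate, Nat.forall_lt_succ_left, verschiebung_coeff_zero,
    verschiebung_coeff_add_one, true_and]

theorem exists_eq_verschiebung_of_coeff_zero_eq_zero {x : 𝕎 T} (hx : x.coeff 0 = 0) :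
    ∃ y, x = verschiebung y :=
  ⟨x.shift 1, by simpa using eq_iterate_verschiebung (n := 1) (by simpa)⟩

theorem sub_mem_ker_truncate_iff {n : ℕ} {x y : 𝕎 T} :
    x - y ∈ RingHom.ker (truncate n) ↔ ∀ i < n, x.coeff i = y.coeff i := by
  rw [mem_ker_truncate, le_coeff_eq_iff_le_sub_coeff_eq_zero]

theorem eq_zero_of_forall_mem_ker_truncate {x : 𝕎 T} (h : ∀ n, x ∈ RingHom.ker (truncate n)) :
    x = 0 := by
  rw [← Ideal.mem_bot, ← TruncatedWittVector.iInf_ker_truncate]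
  exact Ideal.mem_iInf.2 h

theorem exists_forall_sub_mem_ker_truncate (x : ℕ → 𝕎 T)
    (hx : ∀ m n, m ≤ n → x n - x m ∈ RingHom.ker (truncate m)) :
    ∃ y, ∀ n, y - x n ∈ RingHom.ker (truncate n) := by
  refine ⟨mk p fun k => (x (k + 1)).coeff k, fun n => sub_mem_ker_truncate_iff.2 fun k hk => ?_⟩
  exact (sub_mem_ker_truncate_iff.1 (hx (k + 1) n hk) k k.lt_succ_self).symm

theorem map_mem_ker_truncate {U : Type*} [CommRing U] (f : T →+* U) {n : ℕ} {x : 𝕎 T}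
    (hx : x ∈ RingHom.ker (truncate n)) : map f x ∈ RingHom.ker (truncate n) := by
  simp only [mem_ker_truncate, map_coeff] at hx ⊢
  exact fun i hi => by rw [hx i hi, map_zero]

theorem bijective_of_forall_exists_sub_mem_ker_truncate {U ι : Type*} [CommRing U]
    (φ : (ι → 𝕎 T) →+ 𝕎 U)
    (hstrict : ∀ n r, φ r ∈ RingHom.ker (truncate n) ↔ ∀ i, r i ∈ RingHom.ker (truncate n))
    (happrox : ∀ n w, ∃ r, w - φ r ∈ RingHom.ker (truncate n)) :
    Bijective φ := by
  refine ⟨(injective_iff_map_eq_zero φ).2 fun r hr => funext fun i =>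
    eq_zero_of_forall_mem_ker_truncate fun n => (hstrict n r).1 (hr ▸ zero_mem _) i, fun w => ?_⟩
  choose r hr using fun n => happrox n w
  have hcauchy : ∀ i m n, m ≤ n → r n i - r m i ∈ RingHom.ker (truncate m) := by
    intro i m n hmn
    refine (hstrict m (r n - r m)).1 ?_ i
    rw [map_sub, show φ (r n) - φ (r m) = (w - φ (r m)) - (w - φ (r n)) by abel]
    exact sub_mem (hr m) (ker_truncate_antitone hmn (hr n))
  choose ρ hρ using fun i => exists_forall_sub_mem_ker_truncate (fun n => r n i) (hcauchy i)
  refine ⟨ρ, (sub_eq_zero.1 (eq_zero_of_forall_mem_ker_truncate fun n => ?_)).symm⟩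
  rw [show w - φ ρ = (w - φ (r n)) - φ (ρ - r n) by rw [map_sub]; abel]
  exact sub_mem (hr n) ((hstrict n _).2 fun i => hρ i n)

end Filtration

section RelativelyPerfect

variable {R S : Type*} [CommRing R] [CommRing S] [Algebra R S] [CharP R p] [CharP S p]
  {I : Type*} [Fintype I]

theorem relativeFrobenius_tmul (s : S) (r : FrobTwist p R) :
    relativeFrobenius p R S (s ⊗ₜ r) = s ^ p * algebraMap R S r.val :=
  TensorProduct.liftAddHom_tmul _ _ _ _

theorem linearIndependent_pow_of_injective_relativeFrobenius
    (hinj : Injective (relativeFrobenius p R S)) (B : Module.Basis I R S) :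
    LinearIndependent R fun i => B i ^ p := by
  refine Fintype.linearIndependent_iff.2 fun c hc i => ?_
  let x : I →₀ FrobTwist p R := Finsupp.equivFunOnFinite.symm fun i => c i
  have hx : (x.sum fun i r => B i ⊗ₜ[R] r) = 0 := hinj <| by
    rw [map_zero, Finsupp.sum_fintype _ _ fun _ => TensorProduct.tmul_zero _ _, map_sum, ← hc]
    refine Finset.sum_congr rfl fun i _ => ?_
    rw [relativeFrobenius_tmul, Algebra.smul_def, mul_comm]
    rfl
  exact congr($(TensorProduct.sum_tmul_basis_left_eq_zero B x hx) i)

theorem span_pow_eq_top_of_surjective_relativeFrobenius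
    (hsurj : Surjective (relativeFrobenius p R S)) {b : I → S}
    (hb : Submodule.span R (Set.range b) = ⊤) :
    Submodule.span R (Set.range fun i => b i ^ p) = ⊤ := by
  have : ExpChar S p := ExpChar.prime Fact.out
  rw [eq_top_iff]
  rintro t -
  obtain ⟨x, rfl⟩ := hsurj t
  induction x using TensorProduct.induction_on with
  | zero => simp
  | add x y hx hy => rw [map_add]; exact add_mem hx hy
  | tmul s r =>
    obtain ⟨a, rfl⟩ :=
      (Submodule.mem_span_range_iff_exists_fun R).1 (hb ▸ Submodule.mem_top (x := s))
    have : (∑ i, a i • b i) ^ p * algebraMap R S r.val = ∑ i, (a i ^ p * r.val) • b i ^ p := by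
      simp only [sum_pow_char, Finset.sum_mul, Algebra.smul_def, map_mul, map_pow]
      exact Finset.sum_congr rfl fun i _ => by ring
    rw [relativeFrobenius_tmul, this]
    exact sum_mem fun i _ => Submodule.smul_mem _ _ (Submodule.subset_span ⟨i, rfl⟩)

end RelativelyPerfect

section WittModule

variable {R S : Type*} [CommRing R] [CommRing S] [Algebra R S]

theorem smul_eq_map_mul (r : 𝕎 R) (w : 𝕎 S) : r • w = map (algebraMap R S) r * w := rfl

theorem smul_coeff_zero (r : 𝕎 R) (w : 𝕎 S) : (r • w).coeff 0 = r.coeff 0 • w.coeff 0 := by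
  rw [smul_eq_map_mul, mul_coeff_zero, map_coeff, Algebra.smul_def]

theorem verschiebung_smul (t : 𝕎 R) (w : 𝕎 S) :
    verschiebung t • w = verschiebung (t • frobenius w) := by
  rw [smul_eq_map_mul, smul_eq_map_mul, map_verschiebung, verschiebung_mul_frobenius]

theorem smul_mem_ker_truncate {n : ℕ} {r : 𝕎 R} (hr : r ∈ RingHom.ker (truncate n)) (w : 𝕎 S) :
    r • w ∈ RingHom.ker (truncate n) :=
  Ideal.mul_mem_right _ _ (map_mem_ker_truncate _ hr)

variable [CharP R p] [CharP S p] {I : Type*} [Fintype I]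

theorem linearIndependent_coeff_zero_frobenius (hinj : Injective (relativeFrobenius p R S))
    {s : I → 𝕎 S} (hli : LinearIndependent R fun i => (s i).coeff 0)
    (hsp : Submodule.span R (Set.range fun i => (s i).coeff 0) = ⊤) :
    LinearIndependent R fun i => (frobenius (s i)).coeff 0 := by
  simpa only [coeff_frobenius_charP, Module.Basis.mk_apply] using
    linearIndependent_pow_of_injective_relativeFrobenius hinj (Module.Basis.mk hli hsp.ge)

theorem span_coeff_zero_frobenius_eq_top (hsurj : Surjective (relativeFrobenius p R S))
    {s : I → 𝕎 S} (hsp : Submodule.span R (Set.range fun i => (s i).coeff 0) = ⊤) :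
    Submodule.span R (Set.range fun i => (frobenius (s i)).coeff 0) = ⊤ := by
  simpa only [coeff_frobenius_charP] using span_pow_eq_top_of_surjective_relativeFrobenius hsurj hsp

theorem exists_sub_sum_smul_mem_ker_truncate (hsurj : Surjective (relativeFrobenius p R S))
    (n : ℕ) {s : I → 𝕎 S} (hsp : Submodule.span R (Set.range fun i => (s i).coeff 0) = ⊤)
    (w : 𝕎 S) : ∃ r : I → 𝕎 R, w - ∑ i, r i • s i ∈ RingHom.ker (truncate n) := by
  induction n generalizing s w with
  | zero => exact ⟨0, mem_ker_truncate_zero _⟩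
  | succ n ih =>
    obtain ⟨a, ha⟩ := (Submodule.mem_span_range_iff_exists_fun R).1
      (hsp ▸ Submodule.mem_top (x := w.coeff 0))
    obtain ⟨x, hx⟩ : ∃ x, w - ∑ i, teichmuller p (a i) • s i = verschiebung x := by
      refine exists_eq_verschiebung_of_coeff_zero_eq_zero ?_
      simp only [sub_coeff_zero, sum_coeff_zero, smul_coeff_zero, teichmuller_coeff_zero, ha,
        sub_self]
    obtain ⟨t, ht⟩ := ih (span_coeff_zero_frobenius_eq_top hsurj hsp) x
    refine ⟨fun i => teichmuller p (a i) + verschiebung (t i), ?_⟩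
    have hrem : w - ∑ i, (teichmuller p (a i) + verschiebung (t i)) • s i =
        verschiebung (x - ∑ i, t i • frobenius (s i)) := by
      simp only [add_smul, Finset.sum_add_distrib, verschiebung_smul, map_sub, map_sum, ← hx]
      abel
    rw [hrem]
    exact verschiebung_mem_ker_truncate_succ_iff.2 ht

theorem sum_smul_mem_ker_truncate_iff (hRP : Bijective (relativeFrobenius p R S)) (n : ℕ)
    {s : I → 𝕎 S} (hli : LinearIndependent R fun i => (s i).coeff 0)
    (hsp : Submodule.span R (Set.range fun i => (s i).coeff 0) = ⊤) (r : I → 𝕎 R) :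
    ∑ i, r i • s i ∈ RingHom.ker (truncate n) ↔ ∀ i, r i ∈ RingHom.ker (truncate n) := by
  refine ⟨fun h => ?_, fun h => sum_mem fun i _ => smul_mem_ker_truncate (h i) _⟩
  induction n generalizing s r with
  | zero => exact fun i => mem_ker_truncate_zero _
  | succ n ih =>
    have hr0 : ∀ i, (r i).coeff 0 = 0 := Fintype.linearIndependent_iff.1 hli _ <| by
      simpa only [sum_coeff_zero, smul_coeff_zero] using (mem_ker_truncate _ _).1 h 0 n.succ_pos
    choose t ht using fun i => exists_eq_verschiebung_of_coeff_zero_eq_zero (hr0 i)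
    have hsum : ∑ i, r i • s i = verschiebung (∑ i, t i • frobenius (s i)) := by
      simp only [ht, verschiebung_smul, map_sum]
    rw [hsum, verschiebung_mem_ker_truncate_succ_iff] at h
    intro i
    rw [ht i]
    exact verschiebung_mem_ker_truncate_succ_iff.2 <|
      ih (linearIndependent_coeff_zero_frobenius hRP.1 hli hsp)
        (span_coeff_zero_frobenius_eq_top hRP.2 hsp) t h i

end WittModule

end WittVector

/-- if `S̄` is relatively perfect over `R̄` and `(s i)` is a finite family
in `W(S̄)` whose zeroth coordinates form an `R̄`-basis of `S̄`, then `(s i)` is a basis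
of `W(S̄)` as a `W(R̄)`-module (every Witt vector has a unique expansion
`w = Σ r i • s i`), and moreover `Σ r i • s i ∈ V^u(W(S̄))` if and only if each
`r i ∈ V^u(W(R̄))`. -/
theorem wittVectors_basis_of_relativelyPerfect (p : ℕ) [Fact p.Prime] (R S : Type*)
    [CommRing R] [CommRing S] [Algebra R S] [CharP R p] [CharP S p]
    {I : Type*} [Fintype I] (s : I → WittVector p S)
    (hRP : Function.Bijective (relativeFrobenius p R S))
    (hli0 : LinearIndependent R (fun i => (s i).coeff 0))
    (hgen0 : Submodule.span R (Set.range fun i => (s i).coeff 0) = ⊤) :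
    (∀ w : WittVector p S, ∃! r : I → WittVector p R,
        w = ∑ i : I, r i • s i) ∧
    (∀ (u : ℕ) (r : I → WittVector p R),
        (∑ i : I, r i • s i) ∈ Set.range ((⇑(verschiebung (p := p) (R := S)))^[u]) ↔
        ∀ i : I, r i ∈ Set.range ((⇑(verschiebung (p := p) (R := R)))^[u])) := by
  have hstrict := fun n r => sum_smul_mem_ker_truncate_iff hRP n hli0 hgen0 r
  have hbij : Bijective (Fintype.linearCombination (WittVector p R) s).toAddMonoidHom :=
    bijective_of_forall_exists_sub_mem_ker_truncate _ hstrict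
      fun n w => exists_sub_sum_smul_mem_ker_truncate hRP.2 n hgen0 w
  refine ⟨fun w => ?_, fun u r => ?_⟩
  · simpa only [eq_comm, LinearMap.toAddMonoidHom_coe, Fintype.linearCombination_apply] using
      hbij.existsUnique w
  · simp only [mem_range_iterate_verschiebung_iff_mem_ker_truncate]
    exact hstrict u r
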